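/- Let G be a bipartite graph with vertex weights w : V(G) → ℕ₊, let z be a maximum w-matching such that z(e) ≤ 1 for every edge e, and let v be a vertex with w(v) > |V(G)|. Define w* by w*(v) = |V(G)| and w*(u) = w(u) for u ≠ v. Then the set of minimum-weight vertex covers of (G, w) equals the set of minimum-weight vertex covers of (G, w*). -/

import Mathlib

/-!
Since `z ≤ 1` on edges, the load `z(E_x)` of every vertex is at most its degree, hence below
`|V|`: so `v` is unsaturated for both `w` and `w*`, and `z` is also a maximum `w*`-matching.
As `w` and `w*` agree off `v`, it suffices that a vertex left unsaturated by a maximum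
`w`-matching of a bipartite graph lies in no minimum-weight vertex cover.

Let `A` be the colour class of `v`, `B` the other one, and `S` the set of vertices reached from
`v` by alternating walks, which leave `A` along any edge and `B` only along edges with `z > 0`.
Every vertex of `S ∩ B` is saturated: otherwise shortening an alternating walk to it into a path
would give an augmenting path. Given a cover `C ∋ v`, the set `(C \ S) ∪ (S ∩ B)` is again a
cover, and it is lighter: the weight of `(S ∩ B) \ C` equals its load, all of which is carried by
edges into `(C ∩ S) ∩ A`, whose weight exceeds its load because it contains `v`.
-/

open Finset

variable {V : Type*}

variable {V : Type*}

/-- A set of vertices covering every edge. -/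
def IsVertexCover (G : SimpleGraph V) (C : Finset V) : Prop :=
  ∀ ⦃u v : V⦄, G.Adj u v → u ∈ C ∨ v ∈ C

/-- A minimum-weight vertex cover for vertex weights `w`. -/
def IsMinVertexCover [Fintype V] (G : SimpleGraph V) (w : V → ℕ) (C : Finset V) : Prop :=
  IsVertexCover G C ∧
    ∀ C' : Finset V, IsVertexCover G C' → ∑ x ∈ C, w x ≤ ∑ x ∈ C', w x

/-- A `w`-matching: an assignment of naturals to edges whose total at each vertex is at
most the vertex weight. -/
def IsWMatching [Fintype V] [DecidableEq V] (G : SimpleGraph V) [DecidableRel G.Adj]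
    (w : V → ℕ) (z : Sym2 V → ℕ) : Prop :=
  ∀ v : V, ∑ e ∈ G.edgeFinset.filter (fun e => v ∈ e), z e ≤ w v

/-- A maximum `w`-matching: a `w`-matching of maximum total value. -/
def IsMaxWMatching [Fintype V] [DecidableEq V] (G : SimpleGraph V) [DecidableRel G.Adj]
    (w : V → ℕ) (z : Sym2 V → ℕ) : Prop :=
  IsWMatching G w z ∧
    ∀ z' : Sym2 V → ℕ, IsWMatching G w z' →
      ∑ e ∈ G.edgeFinset, z' e ≤ ∑ e ∈ G.edgeFinset, z e

theorem tsub_single_add_single {α : Type*} [DecidableEq α] {z : α → ℕ} {e : α} (he : z e ≠ 0) :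
    z - Pi.single e 1 + Pi.single e 1 = z := by
  ext e'
  rcases eq_or_ne e' e with rfl | hne
  · simp only [Pi.add_apply, Pi.sub_apply, Pi.single_eq_same]
    omega
  · simp [hne]

namespace SimpleGraph

section IncidentSum

variable [Fintype V] [DecidableEq V]

def incidentSum (G : SimpleGraph V) [DecidableRel G.Adj] (z : Sym2 V → ℕ) (x : V) : ℕ :=
  ∑ e ∈ G.edgeFinset.filter (fun e => x ∈ e), z e

variable {G : SimpleGraph V} [DecidableRel G.Adj] {z : Sym2 V → ℕ}

theorem incidentSum_congr {z' : Sym2 V → ℕ} {x : V} (h : ∀ e, x ∈ e → z e = z' e) :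
    G.incidentSum z x = G.incidentSum z' x :=
  sum_congr rfl fun e he => h e (mem_filter.mp he).2

theorem incidentSum_add_single {a b : V} (h : G.Adj a b) (y : V) :
    G.incidentSum (z + Pi.single s(a, b) 1) y =
      G.incidentSum z y + if y = a ∨ y = b then 1 else 0 := by
  simp only [incidentSum, Pi.add_apply, sum_add_distrib, sum_pi_single', mem_filter,
    mem_edgeFinset, mem_edgeSet, h, true_and, Sym2.mem_iff]

theorem incidentSum_tsub_single_add {a b : V} (h : G.Adj a b) (hab : z s(a, b) ≠ 0) (y : V) :
    G.incidentSum (z - Pi.single s(a, b) 1) y + (if y = a ∨ y = b then 1 else 0) =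
      G.incidentSum z y := by
  rw [← incidentSum_add_single h, tsub_single_add_single hab]

theorem sum_edgeFinset_add_single {a b : V} (h : G.Adj a b) :
    ∑ e ∈ G.edgeFinset, (z + Pi.single s(a, b) 1 : Sym2 V → ℕ) e =
      ∑ e ∈ G.edgeFinset, z e + 1 := by
  simp [sum_add_distrib, sum_pi_single', h]

theorem sum_edgeFinset_tsub_single_add {a b : V} (h : G.Adj a b) (hab : z s(a, b) ≠ 0) :
    ∑ e ∈ G.edgeFinset, (z - Pi.single s(a, b) 1 : Sym2 V → ℕ) e + 1 = ∑ e ∈ G.edgeFinset, z e := by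
  rw [← sum_edgeFinset_add_single h, tsub_single_add_single hab]

theorem incidentSum_le_degree (hz : ∀ e ∈ G.edgeFinset, z e ≤ 1) (x : V) :
    G.incidentSum z x ≤ G.degree x := by
  have : G.edgeFinset.filter (fun e => x ∈ e) = G.incidenceFinset x := by
    ext e
    simp [incidenceSet, and_comm]
  calc G.incidentSum z x ≤ ∑ _e ∈ G.edgeFinset.filter (fun e => x ∈ e), 1 :=
        sum_le_sum fun e he => hz e (mem_filter.mp he).1
    _ = G.degree x := by rw [sum_const, smul_eq_mul, mul_one, this, card_incidenceFinset_eq_degree]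

theorem sum_incidentSum_eq (T : Finset V) :
    ∑ x ∈ T, G.incidentSum z x = ∑ e ∈ G.edgeFinset, z e * #(T.filter (· ∈ e)) := by
  simp only [incidentSum, sum_filter]
  rw [sum_comm]
  refine sum_congr rfl fun e _ => ?_
  rw [card_filter, mul_sum]
  exact sum_congr rfl fun x _ => by split_ifs <;> simp

theorem sum_incidentSum_le_sum_incidentSum {T T' : Finset V}
    (hT : ∀ x ∈ T, ∀ y ∈ T, ¬G.Adj x y)
    (hT' : ∀ x ∈ T, ∀ y, G.Adj x y → z s(x, y) ≠ 0 → y ∈ T') :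
    ∑ x ∈ T, G.incidentSum z x ≤ ∑ x ∈ T', G.incidentSum z x := by
  rw [sum_incidentSum_eq, sum_incidentSum_eq]
  refine sum_le_sum fun e he => ?_
  rcases eq_or_ne (z e) 0 with h0 | h0
  · simp [h0]
  rcases (T.filter (· ∈ e)).eq_empty_or_nonempty with hempty | ⟨x, hx⟩
  · simp [hempty]
  rw [mem_filter] at hx
  obtain ⟨y, rfl⟩ := Sym2.mem_iff_exists.mp hx.2
  have hxy : G.Adj x y := mem_edgeFinset.mp he
  have hle : #(T.filter (· ∈ s(x, y))) ≤ 1 := by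
    refine (card_le_card (t := {x}) fun a ha => ?_).trans (card_singleton x).le
    obtain ⟨haT, hae⟩ := mem_filter.mp ha
    rcases Sym2.mem_iff.mp hae with rfl | rfl
    · exact mem_singleton_self a
    · exact absurd hxy (hT x hx.1 a haT)
  have hge : 1 ≤ #(T'.filter (· ∈ s(x, y))) :=
    card_pos.mpr ⟨y, mem_filter.mpr ⟨hT' x hx.1 y hxy h0, Sym2.mem_mk_right x y⟩⟩
  exact Nat.mul_le_mul_left _ (hle.trans hge)

end IncidentSum

variable {G : SimpleGraph V}

def Walk.IsAlternating (c : G.Coloring (Fin 2)) (z : Sym2 V → ℕ) {u x : V} (p : G.Walk u x) :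
    Prop :=
  ∀ d ∈ p.darts, c d.fst = c u ∨ z d.edge ≠ 0

namespace Walk

variable {c : G.Coloring (Fin 2)} {z : Sym2 V → ℕ} {u x y : V}

theorem isAlternating_concat_iff {p : G.Walk u x} (h : G.Adj x y) :
    (p.concat h).IsAlternating c z ↔ p.IsAlternating c z ∧ (c x = c u ∨ z s(x, y) ≠ 0) := by
  simp [IsAlternating, darts_concat, or_imp, forall_and]

theorem IsAlternating.bypass [DecidableEq V] {p : G.Walk u x} (hp : p.IsAlternating c z) :
    p.bypass.IsAlternating c z :=
  fun d hd => hp d (darts_bypass_subset_darts p hd)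

end Walk

end SimpleGraph

theorem isWMatching_iff_incidentSum_le [Fintype V] [DecidableEq V] {G : SimpleGraph V}
    [DecidableRel G.Adj] {w : V → ℕ} {z : Sym2 V → ℕ} :
    IsWMatching G w z ↔ ∀ x, G.incidentSum z x ≤ w x :=
  Iff.rfl

theorem IsVertexCover.sdiff_union_inter [DecidableEq V] {G : SimpleGraph V} {C S B : Finset V}
    (hC : IsVertexCover G C) (hB : ∀ ⦃a b⦄, G.Adj a b → a ∈ B ∨ b ∈ B)
    (hS : ∀ ⦃a b⦄, G.Adj a b → a ∈ S → a ∉ B → b ∈ S) :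
    IsVertexCover G (C \ S ∪ S ∩ B) := by
  suffices h : ∀ ⦃a b⦄, G.Adj a b → b ∈ B → a ∈ C \ S ∪ S ∩ B ∨ b ∈ C \ S ∪ S ∩ B by
    intro a b hab
    rcases hB hab with ha | hb
    · exact (h hab.symm ha).symm
    · exact h hab hb
  intro a b hab hb
  have := hC hab
  have := @hS a b hab
  simp only [mem_union, mem_sdiff, mem_inter]
  tauto

theorem sum_sdiff_union_inter_add_sum [DecidableEq V] (C S B : Finset V) (f : V → ℕ) :
    ∑ x ∈ C \ S ∪ S ∩ B, f x + ∑ x ∈ (C ∩ S) \ B, f x =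
      ∑ x ∈ C, f x + ∑ x ∈ (S ∩ B) \ C, f x := by
  have hdisj : Disjoint (C \ S) (S ∩ B) :=
    disjoint_left.mpr fun x hx hx' => (mem_sdiff.mp hx).2 (mem_inter.mp hx').1
  have hcomm : S ∩ B ∩ C = C ∩ S ∩ B := by
    rw [inter_comm, inter_assoc]
  rw [sum_union hdisj, ← sum_inter_add_sum_sdiff C S, ← sum_inter_add_sum_sdiff (C ∩ S) B,
    ← sum_inter_add_sum_sdiff (S ∩ B) C, hcomm]
  omega

section MinVertexCover

variable [Fintype V] {G : SimpleGraph V} {w w' : V → ℕ} {v : V}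

theorem exists_isMinVertexCover (G : SimpleGraph V) (w : V → ℕ) :
    ∃ C, IsMinVertexCover G w C := by
  classical
  obtain ⟨C, hC, hmin⟩ := (univ.filter (IsVertexCover G)).exists_min_image
    (fun C => ∑ x ∈ C, w x) ⟨univ, mem_filter.mpr ⟨mem_univ _, fun a _ _ => .inl (mem_univ a)⟩⟩
  exact ⟨C, (mem_filter.mp hC).2, fun C' hC' => hmin C' (mem_filter.mpr ⟨mem_univ C', hC'⟩)⟩

theorem IsMinVertexCover.of_eqOn_compl_singleton {C : Finset V} (hC : IsMinVertexCover G w C)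
    (hvC : v ∉ C) (hw : Set.EqOn w w' {v}ᶜ) (h' : ∀ D, IsMinVertexCover G w' D → v ∉ D) :
    IsMinVertexCover G w' C := by
  obtain ⟨D, hD⟩ := exists_isMinVertexCover G w'
  have hsum {E : Finset V} (hE : v ∉ E) : ∑ x ∈ E, w x = ∑ x ∈ E, w' x :=
    sum_congr rfl fun x hx => hw (Set.mem_compl_singleton_iff.mpr (ne_of_mem_of_not_mem hx hE))
  refine ⟨hC.1, fun C' hC' => ?_⟩
  calc ∑ x ∈ C, w' x = ∑ x ∈ C, w x := (hsum hvC).symm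
    _ ≤ ∑ x ∈ D, w x := hC.2 D hD.1
    _ = ∑ x ∈ D, w' x := hsum (h' D hD)
    _ ≤ ∑ x ∈ C', w' x := hD.2 C' hC'

theorem isMinVertexCover_iff_of_eqOn_compl_singleton {C : Finset V} (hw : Set.EqOn w w' {v}ᶜ)
    (h : ∀ D, IsMinVertexCover G w D → v ∉ D) (h' : ∀ D, IsMinVertexCover G w' D → v ∉ D) :
    IsMinVertexCover G w C ↔ IsMinVertexCover G w' C :=
  ⟨fun hC => hC.of_eqOn_compl_singleton (h C hC) hw h',
    fun hC => hC.of_eqOn_compl_singleton (h' C hC) hw.symm h⟩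

end MinVertexCover

section Matching

variable [Fintype V] [DecidableEq V] {G : SimpleGraph V} [DecidableRel G.Adj]
  {c : G.Coloring (Fin 2)} {w : V → ℕ} {z : Sym2 V → ℕ} {a b : V}

open SimpleGraph (incidentSum_add_single incidentSum_tsub_single_add incidentSum_congr)

theorem IsMaxWMatching.of_le {w' : V → ℕ} (hz : IsMaxWMatching G w z) (hle : w' ≤ w)
    (hz' : IsWMatching G w' z) : IsMaxWMatching G w' z :=
  ⟨hz', fun _ h => hz.2 _ fun x => (h x).trans (hle x)⟩

theorem IsWMatching.incidentSum_add_single_le (hz : IsWMatching G w z)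
    (ha : G.incidentSum z a < w a) (h : G.Adj a b) {y : V} (hy : y ≠ b) :
    G.incidentSum (z + Pi.single s(a, b) 1) y ≤ w y := by
  rw [incidentSum_add_single h]
  rcases eq_or_ne y a with rfl | hya
  · simpa using ha
  · simpa [hya, hy] using isWMatching_iff_incidentSum_le.mp hz y

theorem isWMatching_tsub_single (hz : ∀ y ≠ a, G.incidentSum z y ≤ w y)
    (ha : G.incidentSum z a ≤ w a + 1) (h : G.Adj a b) (hab : z s(a, b) ≠ 0) :
    IsWMatching G w (z - Pi.single s(a, b) 1) := by
  refine isWMatching_iff_incidentSum_le.mpr fun y => ?_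
  have hy := incidentSum_tsub_single_add h hab y
  rcases eq_or_ne y a with rfl | hya
  · simp only [true_or, if_true] at hy
    omega
  · have := hz y hya
    omega

-- `z'` adds one unit on the edges of `p` leaving `u`'s colour class and removes one on the
-- others.
theorem IsWMatching.exists_augment (hz : IsWMatching G w z) {u : V}
    (hu : G.incidentSum z u < w u) {x : V} (p : G.Walk u x) (hp : p.IsPath)
    (halt : p.IsAlternating c z) :
    (c x = c u → ∃ z', IsWMatching G w z' ∧
      ∑ e ∈ G.edgeFinset, z' e = ∑ e ∈ G.edgeFinset, z e ∧ G.incidentSum z' x < w x ∧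
      ∀ y ∉ p.support, ∀ e, y ∈ e → z' e = z e) ∧
    (c x ≠ c u → ∃ z', (∀ y ≠ x, G.incidentSum z' y ≤ w y) ∧
      ∑ e ∈ G.edgeFinset, z' e = ∑ e ∈ G.edgeFinset, z e + 1 ∧
      G.incidentSum z' x = G.incidentSum z x + 1 ∧
      ∀ y ∉ p.support, ∀ e, y ∈ e → z' e = z e) := by
  induction p using SimpleGraph.Walk.concatRec with
  | Hnil => exact ⟨fun _ => ⟨z, hz, rfl, hu, fun _ _ _ _ => rfl⟩, fun h => absurd rfl h⟩
  | @Hconcat u a b p h ih =>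
    obtain ⟨hp, hb⟩ := (SimpleGraph.Walk.concat_isPath_iff h).mp hp
    obtain ⟨halt, hstep⟩ := (SimpleGraph.Walk.isAlternating_concat_iff h).mp halt
    have hoff : ∀ y ∉ (p.concat h).support, ∀ e, y ∈ e → y ∉ p.support ∧ e ≠ s(a, b) := by
      rintro y hy e hye
      simp only [SimpleGraph.Walk.support_concat, List.mem_append, List.mem_singleton,
        not_or] at hy
      refine ⟨hy.1, fun he => ?_⟩
      rcases Sym2.mem_iff.mp (he ▸ hye) with rfl | rfl
      exacts [hy.1 p.end_mem_support, hy.2 rfl]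
    by_cases hca : c a = c u
    · refine ⟨fun hcb => absurd (hca.trans hcb.symm) (c.valid h), fun _ => ?_⟩
      obtain ⟨z₁, hz₁, hsum, hslack, hagree⟩ := (ih hu hp halt).1 hca
      refine ⟨z₁ + Pi.single s(a, b) 1, fun y hy => hz₁.incidentSum_add_single_le hslack h hy,
        by rw [SimpleGraph.sum_edgeFinset_add_single h, hsum], ?_, fun y hy e hye => ?_⟩
      · rw [incidentSum_add_single h, if_pos (Or.inr rfl), incidentSum_congr (hagree b hb)]
      · simp [(hoff y hy e hye).2, hagree y (hoff y hy e hye).1 e hye]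
    · have hcb : c b = c u := by
        have := c.valid h
        omega
      refine ⟨fun _ => ?_, fun h' => absurd hcb h'⟩
      obtain ⟨z₁, hz₁, hsum, hexcess, hagree⟩ := (ih hu hp halt).2 hca
      have hmatched : z₁ s(a, b) ≠ 0 := by
        rw [hagree b hb _ (Sym2.mem_mk_right a b)]
        exact hstep.resolve_left hca
      have hexcess' : G.incidentSum z₁ a ≤ w a + 1 := by
        rw [hexcess]
        exact Nat.add_le_add_right (hz a) 1
      refine ⟨z₁ - Pi.single s(a, b) 1, isWMatching_tsub_single hz₁ hexcess' h hmatched, ?_, ?_,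
        fun y hy e hye => ?_⟩
      · have := SimpleGraph.sum_edgeFinset_tsub_single_add h hmatched
        omega
      · have hload := incidentSum_tsub_single_add h hmatched b
        rw [if_pos (Or.inr rfl), incidentSum_congr (hagree b hb)] at hload
        have := isWMatching_iff_incidentSum_le.mp hz b
        omega
      · simp [(hoff y hy e hye).2, hagree y (hoff y hy e hye).1 e hye]

theorem IsMaxWMatching.incidentSum_eq_of_isAlternating (hz : IsMaxWMatching G w z) {u x : V}
    (hu : G.incidentSum z u < w u) (p : G.Walk u x) (halt : p.IsAlternating c z)
    (hx : c x ≠ c u) : G.incidentSum z x = w x := by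
  refine le_antisymm (hz.1 x) (not_lt.mp fun hlt => ?_)
  obtain ⟨z', hz', hsum, hload, -⟩ :=
    (hz.1.exists_augment hu p.bypass p.bypass_isPath halt.bypass).2 hx
  have : IsWMatching G w z' := fun y => by
    rcases eq_or_ne y x with rfl | hy
    · exact hload.trans_le hlt
    · exact hz' y hy
  have := hz.2 z' this
  omega

theorem IsVertexCover.exists_lighter (c : G.Coloring (Fin 2)) (hz : IsMaxWMatching G w z)
    {v : V} (hv : G.incidentSum z v < w v) {C : Finset V} (hC : IsVertexCover G C)
    (hvC : v ∈ C) : ∃ C', IsVertexCover G C' ∧ ∑ x ∈ C', w x < ∑ x ∈ C, w x := by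
  classical
  let S := univ.filter fun x => ∃ p : G.Walk v x, p.IsAlternating c z
  let B := univ.filter fun x => c x ≠ c v
  have hvS : v ∈ S := mem_filter.mpr ⟨mem_univ v, .nil, by simp [SimpleGraph.Walk.IsAlternating]⟩
  have hstep : ∀ ⦃x y⦄, G.Adj x y → x ∈ S → (c x = c v ∨ z s(x, y) ≠ 0) → y ∈ S := by
    intro x y h hx hxy
    obtain ⟨p, hp⟩ := (mem_filter.mp hx).2
    exact mem_filter.mpr
      ⟨mem_univ y, p.concat h, (SimpleGraph.Walk.isAlternating_concat_iff h).mpr ⟨hp, hxy⟩⟩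
  have hcolor : ∀ ⦃x y⦄, G.Adj x y → c x ≠ c v → c y = c v := fun x y h hx => by
    have := c.valid h
    omega
  have key : ∑ x ∈ (S ∩ B) \ C, w x < ∑ x ∈ (C ∩ S) \ B, w x := by
    calc ∑ x ∈ (S ∩ B) \ C, w x = ∑ x ∈ (S ∩ B) \ C, G.incidentSum z x := by
          refine sum_congr rfl fun x hx => ?_
          simp only [mem_sdiff, mem_inter, mem_filter, mem_univ, true_and, S, B] at hx
          obtain ⟨⟨⟨p, hp⟩, hcx⟩, -⟩ := hx
          exact (hz.incidentSum_eq_of_isAlternating hv p hp hcx).symm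
      _ ≤ ∑ x ∈ (C ∩ S) \ B, G.incidentSum z x := by
          refine SimpleGraph.sum_incidentSum_le_sum_incidentSum (fun x hx y hy h => ?_)
            fun x hx y h h0 => ?_
          · simp only [mem_sdiff, mem_inter, mem_filter, mem_univ, true_and, B] at hx hy
            exact hy.1.2 (hcolor h hx.1.2)
          · simp only [mem_sdiff, mem_inter, mem_filter, mem_univ, true_and, not_not, B] at hx ⊢
            exact ⟨⟨(hC h).resolve_left hx.2, hstep h hx.1.1 (Or.inr h0)⟩, hcolor h hx.1.2⟩
      _ < ∑ x ∈ (C ∩ S) \ B, w x :=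
          sum_lt_sum (fun x _ => hz.1 x) ⟨v, by simp [hvC, hvS, B], hv⟩
  refine ⟨C \ S ∪ S ∩ B, hC.sdiff_union_inter (fun a b h => ?_)
    (fun a b h ha haB => hstep h ha (Or.inl ?_)), ?_⟩
  · by_cases ha : c a = c v
    · exact Or.inr (by simpa [B] using fun hb => c.valid h (ha.trans hb.symm))
    · exact Or.inl (by simpa [B] using ha)
  · simpa [B] using haB
  · have := sum_sdiff_union_inter_add_sum C S B w
    omega

theorem IsMinVertexCover.notMem {C : Finset V} (hC : IsMinVertexCover G w C)
    (c : G.Coloring (Fin 2)) (hz : IsMaxWMatching G w z) {v : V}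
    (hv : G.incidentSum z v < w v) : v ∉ C := fun hvC =>
  let ⟨C', hC', hlt⟩ := hC.1.exists_lighter c hz hv hvC
  absurd (hC.2 C' hC') (not_le.mpr hlt)

end Matching

theorem stmt_6_general [Fintype V] [DecidableEq V] (G : SimpleGraph V) [DecidableRel G.Adj]
    (hbip : G.Colorable 2) (w : V → ℕ)
    (z : Sym2 V → ℕ) (hz : IsMaxWMatching G w z)
    (hz1 : ∀ e ∈ G.edgeFinset, z e ≤ 1)
    (v : V) (hv : Fintype.card V < w v) :
    ∀ C : Finset V, IsMinVertexCover G w C ↔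
      IsMinVertexCover G (Function.update w v (Fintype.card V)) C := by
  obtain ⟨c⟩ := hbip
  have hload (x : V) : G.incidentSum z x < Fintype.card V :=
    (G.incidentSum_le_degree hz1 x).trans_lt (G.degree_lt_card_verts x)
  have hz' : IsMaxWMatching G (Function.update w v (Fintype.card V)) z := by
    refine hz.of_le (update_le_iff.mpr ⟨hv.le, fun _ _ => le_rfl⟩)
      (isWMatching_iff_incidentSum_le.mpr fun x => ?_)
    rcases eq_or_ne x v with rfl | hx
    · simpa using (hload x).le
    · simpa [hx] using isWMatching_iff_incidentSum_le.mp hz.1 x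
  intro C
  exact isMinVertexCover_iff_of_eqOn_compl_singleton
    (fun x hx => (Function.update_of_ne hx _ _).symm)
    (fun D hD => hD.notMem c hz ((hload v).trans hv))
    (fun D hD => hD.notMem c hz' (by simpa using hload v))

/-- Reduction Rule 2. If a maximum `w`-matching of a bipartite graph has
`z(e) ≤ 1` on every edge and a vertex `v` has weight `w(v) > |V(G)|`, then lowering
the weight of `v` to `|V(G)|` preserves the collection of minimum-weight vertex covers. -/
theorem stmt_6 [Fintype V] [DecidableEq V] (G : SimpleGraph V) [DecidableRel G.Adj]
    (hbip : G.Colorable 2) (w : V → ℕ) (hw : ∀ x, 0 < w x)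
    (z : Sym2 V → ℕ) (hz : IsMaxWMatching G w z)
    (hz1 : ∀ e ∈ G.edgeFinset, z e ≤ 1)
    (v : V) (hv : Fintype.card V < w v) :
    ∀ C : Finset V, IsMinVertexCover G w C ↔
      IsMinVertexCover G (Function.update w v (Fintype.card V)) C :=
  stmt_6_general G hbip w z hz hz1 v hv
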